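/- For n ≥ 0, D^{(m)}_{m,λ}(n,α) = m^n Σ_{k=0}^n C_k(1; -α/m) S_{2,λ/m}(n,k), where D^{(m)}_{m,λ} is the degenerate m-Dowling polynomial and C_k(x;β) are the Charlier polynomials. -/

import Mathlib

open Finset

/-- Degenerate falling factorial `(x)_{n,λ} = x(x-λ)⋯(x-(n-1)λ)`. -/
noncomputable def dfall (lam x : ℝ) (n : ℕ) : ℝ := ∏ i ∈ Finset.range n, (x - i * lam)

/-- Ordinary falling factorial `(x)_n = x(x-1)⋯(x-n+1)`. -/
noncomputable def ffall (x : ℝ) (n : ℕ) : ℝ := ∏ i ∈ Finset.range n, (x - i)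

/-!
With `g(t) = (1 + λt)^{m/λ}` and `H(u) = u e^{(α/m)(u-1)}`, the generating function of the
`m`-Dowling polynomials is `H ∘ g`, and `C_k(1; -α/m) = H⁽ᵏ⁾(1)`. As `g(0) = 1`, the `n`-th
derivative of `H ∘ g` at `0` depends only on the `n`-jet of `H` at `1`, so `H` may be replaced by
its Taylor polynomial and, by linearity, by a monomial `u^j`. Then `g^j = (1 + λt)^{jm/λ}`, whose
`n`-th derivative at `0` is `∏_{i<n} (jm - iλ) = m^n (j)_{n,λ/m} = m^n ∑_k S_{2,λ/m}(n,k) (j)_k`,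
and `(j)_k` is the `k`-th derivative of `u^j` at `1`.
-/

open Polynomial Topology

lemma dfall_succ' (lam x : ℝ) (n : ℕ) : dfall lam x (n + 1) = x * dfall lam (x - lam) n := by
  simp only [dfall, prod_range_succ', Nat.cast_zero, zero_mul, sub_zero, Nat.cast_succ]
  rw [mul_comm]
  congr 1
  exact prod_congr rfl fun i _ => by ring

lemma dfall_mul_mul (c lam x : ℝ) (n : ℕ) : dfall (c * lam) (c * x) n = c ^ n * dfall lam x n := by
  rw [dfall, dfall, show c ^ n = ∏ _i ∈ range n, c by simp, ← prod_mul_distrib]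
  exact prod_congr rfl fun i _ => by ring

lemma ffall_natCast (j k : ℕ) : ffall j k = j.descFactorial k := by
  rw [ffall, ← descPochhammer_eval_eq_prod_range, descPochhammer_eval_eq_descFactorial]

section Jet

variable {s : Set ℝ} {x : ℝ}

-- The factor `ψ` is what makes the induction close: differentiating `ψ · (H ∘ φ)` produces
-- `ψ' · (H ∘ φ) + (ψ φ') · (H' ∘ φ)`, two terms of the same shape with `H` or `H'`.
lemma iteratedDeriv_mul_comp_eq_zero (hs : IsOpen s) (hx : x ∈ s) (N : ℕ) {ψ φ H : ℝ → ℝ}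
    (hψ : ContDiffOn ℝ N ψ s) (hφ : ContDiffOn ℝ N φ s) (hH : ContDiff ℝ N H)
    (hjet : ∀ i ≤ N, iteratedDeriv i H (φ x) = 0) :
    iteratedDeriv N (fun t => ψ t * H (φ t)) x = 0 := by
  induction N generalizing ψ H with
  | zero =>
    have h0 := hjet 0 le_rfl
    rw [iteratedDeriv_zero] at h0 ⊢
    rw [h0, mul_zero]
  | succ N ih =>
    have hd : (N + 1 : WithTop ℕ∞) ≠ 0 := by simp
    have hderiv : deriv (fun t => ψ t * H (φ t)) =ᶠ[𝓝 x]
        fun t => deriv ψ t * H (φ t) + (ψ t * deriv φ t) * deriv H (φ t) := by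
      filter_upwards [hs.mem_nhds hx] with t ht
      have hψt := (hψ.differentiableOn hd t ht).differentiableAt (hs.mem_nhds ht)
      have hφt := (hφ.differentiableOn hd t ht).differentiableAt (hs.mem_nhds ht)
      have hHt := (hH.differentiable hd) (φ t)
      exact (hψt.hasDerivAt.mul (hHt.hasDerivAt.comp t hφt.hasDerivAt)).deriv.trans
        (by rw [Function.comp_apply]; ring)
    have hψ' : ContDiffOn ℝ N (deriv ψ) s := hψ.deriv_of_isOpen hs le_rfl
    have hφN : ContDiffOn ℝ N φ s := hφ.of_le (by norm_cast; omega)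
    have hHN : ContDiff ℝ N H := hH.of_le (by norm_cast; omega)
    have hψφ' : ContDiffOn ℝ N (fun t => ψ t * deriv φ t) s :=
      (hψ.of_le (by norm_cast; omega)).mul (hφ.deriv_of_isOpen hs le_rfl)
    have h₁ : ContDiffAt ℝ N (fun t => deriv ψ t * H (φ t)) x :=
      (hψ'.mul (hHN.comp_contDiffOn hφN)).contDiffAt (hs.mem_nhds hx)
    have h₂ : ContDiffAt ℝ N (fun t => ψ t * deriv φ t * deriv H (φ t)) x :=
      (hψφ'.mul (hH.deriv'.comp_contDiffOn hφN)).contDiffAt (hs.mem_nhds hx)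
    rw [iteratedDeriv_succ', hderiv.iteratedDeriv_eq, iteratedDeriv_fun_add h₁ h₂,
      ih hψ' hφN hHN fun i hi => hjet i (by omega),
      ih hψφ' hφN hH.deriv' fun i hi => by
        rw [← iteratedDeriv_succ']; exact hjet (i + 1) (by omega), add_zero]

lemma iteratedDeriv_comp_eq_of_iteratedDeriv_eq (hs : IsOpen s) (hx : x ∈ s) (N : ℕ)
    {φ H₁ H₂ : ℝ → ℝ} (hφ : ContDiffOn ℝ N φ s) (hH₁ : ContDiff ℝ N H₁) (hH₂ : ContDiff ℝ N H₂)
    (hjet : ∀ i ≤ N, iteratedDeriv i H₁ (φ x) = iteratedDeriv i H₂ (φ x)) :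
    iteratedDeriv N (fun t => H₁ (φ t)) x = iteratedDeriv N (fun t => H₂ (φ t)) x := by
  have hzero := iteratedDeriv_mul_comp_eq_zero hs hx N (ψ := fun _ => 1) contDiffOn_const hφ
    (hH₁.sub hH₂) fun i hi => by
      rw [iteratedDeriv_fun_sub (hH₁.contDiffAt.of_le (by exact_mod_cast hi))
        (hH₂.contDiffAt.of_le (by exact_mod_cast hi)), hjet i hi, sub_self]
  have hφx := hφ.contDiffAt (hs.mem_nhds hx)
  have h₁ : ContDiffAt ℝ N (fun t => H₁ (φ t)) x := hH₁.contDiffAt.comp x hφx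
  have h₂ : ContDiffAt ℝ N (fun t => H₂ (φ t)) x := hH₂.contDiffAt.comp x hφx
  simp only [one_mul] at hzero
  rwa [iteratedDeriv_fun_sub h₁ h₂, sub_eq_zero] at hzero

end Jet

noncomputable def taylorPolynomial (H : ℝ → ℝ) (x₀ : ℝ) (n : ℕ) : ℝ[X] :=
  ∑ i ∈ range (n + 1), C (iteratedDeriv i H x₀ / i.factorial) * (X - C x₀) ^ i

lemma iteratedDeriv_eval_taylorPolynomial (H : ℝ → ℝ) (x₀ : ℝ) {k n : ℕ} (hk : k ≤ n) :
    iteratedDeriv k (fun u => (taylorPolynomial H x₀ n).eval u) x₀ = iteratedDeriv k H x₀ := by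
  have hterm (i : ℕ) :
      iteratedDeriv k (fun u => (u - x₀) ^ i) x₀ = if k = i then (i.factorial : ℝ) else 0 := by
    rw [iteratedDeriv_comp_sub_const k (· ^ i) x₀]
    dsimp only
    rw [sub_self, iteratedDeriv_fun_pow_zero, apply_ite Nat.cast, Nat.cast_zero]
  simp only [taylorPolynomial, eval_finsetSum, eval_mul, eval_C, eval_pow, eval_sub, eval_X]
  rw [iteratedDeriv_fun_sum fun i _ => by fun_prop]
  simp only [iteratedDeriv_const_mul_field, hterm, mul_ite, mul_zero, sum_ite_eq,
    mem_range.mpr (Nat.lt_succ_of_le hk), if_true]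
  exact div_mul_cancel₀ _ (Nat.cast_ne_zero.mpr k.factorial_ne_zero)

section OneAddMulRpow

variable {lam : ℝ}

lemma isOpen_one_add_mul_pos (lam : ℝ) : IsOpen {t : ℝ | 0 < 1 + lam * t} :=
  isOpen_lt continuous_const (by fun_prop)

lemma contDiffOn_one_add_mul_rpow (lam c : ℝ) (n : WithTop ℕ∞) :
    ContDiffOn ℝ n (fun t : ℝ => (1 + lam * t) ^ (c / lam)) {t : ℝ | 0 < 1 + lam * t} :=
  ContDiffOn.rpow_const_of_ne (by fun_prop) fun _ ht => ht.ne'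

lemma hasDerivAt_one_add_mul_rpow (hlam : lam ≠ 0) (c : ℝ) {t : ℝ} (ht : 0 < 1 + lam * t) :
    HasDerivAt (fun t : ℝ => (1 + lam * t) ^ (c / lam))
      (c * (1 + lam * t) ^ ((c - lam) / lam)) t := by
  have h := (((hasDerivAt_id t).const_mul lam).const_add 1).rpow_const (p := c / lam)
    (Or.inl ht.ne')
  simp only [id, mul_one] at h
  convert h using 1
  rw [show c / lam - 1 = (c - lam) / lam by field_simp]
  field_simp

lemma iteratedDeriv_one_add_mul_rpow_zero (hlam : lam ≠ 0) (n : ℕ) (c : ℝ) :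
    iteratedDeriv n (fun t : ℝ => (1 + lam * t) ^ (c / lam)) 0 = dfall lam c n := by
  induction n generalizing c with
  | zero => simp [dfall]
  | succ n ih =>
    have hderiv : deriv (fun t : ℝ => (1 + lam * t) ^ (c / lam)) =ᶠ[𝓝 0]
        fun t => c * (1 + lam * t) ^ ((c - lam) / lam) := by
      filter_upwards [(isOpen_one_add_mul_pos lam).mem_nhds (by simp)] with t ht
      exact (hasDerivAt_one_add_mul_rpow hlam c ht).deriv
    rw [iteratedDeriv_succ', hderiv.iteratedDeriv_eq, iteratedDeriv_const_mul_field, ih,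
      dfall_succ']

lemma iteratedDeriv_one_add_mul_rpow_pow_zero (hlam : lam ≠ 0) {m : ℝ} (hm : m ≠ 0) (n j : ℕ) :
    iteratedDeriv n (fun t : ℝ => ((1 + lam * t) ^ (m / lam)) ^ j) 0
      = m ^ n * dfall (lam / m) j n := by
  have hpow : (fun t : ℝ => ((1 + lam * t) ^ (m / lam)) ^ j) =ᶠ[𝓝 0]
      fun t => (1 + lam * t) ^ ((m * j) / lam) := by
    filter_upwards [(isOpen_one_add_mul_pos lam).mem_nhds (by simp)] with t ht
    rw [← Real.rpow_natCast, ← Real.rpow_mul ht.le]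
    ring_nf
  rw [hpow.iteratedDeriv_eq, iteratedDeriv_one_add_mul_rpow_zero hlam, ← dfall_mul_mul,
    mul_div_cancel₀ lam hm]

end OneAddMulRpow

section DegenerateStirling

variable {lam m : ℝ} {n : ℕ} {S : ℕ → ℝ}

lemma Polynomial.contDiff_eval (P : ℝ[X]) (n : WithTop ℕ∞) : ContDiff ℝ n fun u => P.eval u := by
  simpa using P.contDiff_aeval (𝕜 := ℝ) n

lemma iteratedDeriv_eval_comp_one_add_mul_rpow (hlam : lam ≠ 0) (hm : m ≠ 0)
    (hS : ∀ j : ℕ, dfall (lam / m) j n = ∑ k ∈ range (n + 1), S k * ffall j k) (P : ℝ[X]) :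
    iteratedDeriv n (fun t => P.eval ((1 + lam * t) ^ (m / lam))) 0
      = m ^ n * ∑ k ∈ range (n + 1), S k * iteratedDeriv k (fun u => P.eval u) 1 := by
  have hg : ContDiffAt ℝ n (fun t : ℝ => (1 + lam * t) ^ (m / lam)) 0 :=
    (contDiffOn_one_add_mul_rpow lam m n).contDiffAt
      ((isOpen_one_add_mul_pos lam).mem_nhds (by simp))
  have hP (k : ℕ) : iteratedDeriv k (fun u => P.eval u) 1
      = ∑ j ∈ range (P.natDegree + 1), P.coeff j * j.descFactorial k := by
    simp only [eval_eq_sum_range]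
    rw [iteratedDeriv_fun_sum fun j _ => by fun_prop]
    simp
  simp only [hP]
  simp only [eval_eq_sum_range]
  rw [iteratedDeriv_fun_sum fun j _ => contDiffAt_const.mul (hg.pow j)]
  simp only [iteratedDeriv_const_mul_field, iteratedDeriv_one_add_mul_rpow_pow_zero hlam hm, hS,
    ffall_natCast, mul_sum]
  rw [sum_comm]
  exact sum_congr rfl fun k _ => sum_congr rfl fun j _ => by ring

lemma iteratedDeriv_comp_one_add_mul_rpow (hlam : lam ≠ 0) (hm : m ≠ 0)
    (hS : ∀ j : ℕ, dfall (lam / m) j n = ∑ k ∈ range (n + 1), S k * ffall j k) {H : ℝ → ℝ}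
    (hH : ContDiff ℝ n H) :
    iteratedDeriv n (fun t => H ((1 + lam * t) ^ (m / lam))) 0
      = m ^ n * ∑ k ∈ range (n + 1), S k * iteratedDeriv k H 1 := by
  have hjet (k : ℕ) (hk : k ≤ n) :
      iteratedDeriv k H ((1 + lam * 0) ^ (m / lam))
        = iteratedDeriv k (fun u => (taylorPolynomial H 1 n).eval u)
            ((1 + lam * 0) ^ (m / lam)) := by
    rw [mul_zero, add_zero, Real.one_rpow, iteratedDeriv_eval_taylorPolynomial H 1 hk]
  rw [iteratedDeriv_comp_eq_of_iteratedDeriv_eq (isOpen_one_add_mul_pos lam) (by simp) n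
      (contDiffOn_one_add_mul_rpow lam m n) hH (Polynomial.contDiff_eval _ n) hjet,
    iteratedDeriv_eval_comp_one_add_mul_rpow hlam hm hS]
  congr 1
  exact sum_congr rfl fun k hk => by
    rw [iteratedDeriv_eval_taylorPolynomial H 1 (Nat.lt_succ_iff.mp (mem_range.mp hk))]

end DegenerateStirling

theorem stmt12 (m : ℕ) (hm : 0 < m) (α lam : ℝ) (hlam : lam ≠ 0)
    (D : ℕ → ℝ)
    (hD : ∀ n : ℕ, iteratedDeriv n
        (fun t : ℝ => (1 + lam * t) ^ ((m : ℝ) / lam) *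
          Real.exp ((α / m) * ((1 + lam * t) ^ ((m : ℝ) / lam) - 1))) 0 = D n)
    (C : ℕ → ℝ)
    (hC : ∀ k : ℕ, iteratedDeriv k
        (fun t : ℝ => Real.exp ((α / m) * t) * (1 + t) ^ (1 : ℝ)) 0 = C k)
    (S : ℕ → ℕ → ℝ)
    (hS : ∀ (x : ℝ) (N : ℕ),
      dfall (lam / m) x N = ∑ k ∈ Finset.range (N + 1), S N k * ffall x k)
    (n : ℕ) :
    D n = (m : ℝ) ^ n * ∑ k ∈ Finset.range (n + 1), C k * S n k := by
  set H : ℝ → ℝ := fun u => Real.exp ((α / m) * (u - 1)) * (1 + (u - 1)) ^ (1 : ℝ) with hHdef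
  have hH : ContDiff ℝ n H := by
    simp only [hHdef, Real.rpow_one]
    fun_prop
  have hCH (k : ℕ) : iteratedDeriv k H 1 = C k := by
    rw [← hC k, hHdef, iteratedDeriv_comp_sub_const k
      (fun t : ℝ => Real.exp ((α / m) * t) * (1 + t) ^ (1 : ℝ)) 1]
    simp only [sub_self]
  have hDH : (fun t : ℝ => (1 + lam * t) ^ ((m : ℝ) / lam) *
      Real.exp ((α / m) * ((1 + lam * t) ^ ((m : ℝ) / lam) - 1))) =
      fun t => H ((1 + lam * t) ^ ((m : ℝ) / lam)) := by
    funext t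
    simp only [hHdef, Real.rpow_one, add_sub_cancel]
    ring
  rw [← hD n, hDH,
    iteratedDeriv_comp_one_add_mul_rpow hlam (Nat.cast_pos.mpr hm).ne' (fun j => hS j n) hH]
  simp only [hCH, mul_comm]
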